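/- In the dynamic network creation game in which players' communication cost uses the temporal shortest distance, for every real atomic cost α with 0 < α ≤ 2 and every number of players n ≥ 2, the optimal social cost equals c*(α, n) = (α+2)·n(n−1)/2, and it is achieved by any strategy profile whose communication temporal graph is the complete graph K_n equipped with any simple labelling. -/

import Mathlib

open scoped ENNReal BigOperators

/-- A temporal path from `u` to `v`, given as a list of steps `(next vertex, time label)`.
The labelling `lab` gives, for each (ordered) pair of vertices, the set of time labels of the
edge joining them (empty if there is no edge); it is symmetric for temporal graphs arising
from strategy profiles.  The conditions say that consecutive steps use time labels belonging
to the corresponding edge, that time labels strictly increase along the path, that no vertex is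
repeated, and that the path ends at `v`. -/
def IsTemporalPath {V : Type*} (lab : V → V → Set ℕ) (u v : V) (p : List (V × ℕ)) : Prop :=
  List.Chain (fun a b => b.2 ∈ lab a.1 b.1) (u, 0) p ∧
  List.Chain' (· < ·) (p.map Prod.snd) ∧
  (u :: p.map Prod.fst).Nodup ∧
  (u :: p.map Prod.fst).getLast (List.cons_ne_nil _ _) = v

/-- The temporal shortest distance from `u` to `v`: the least number of edges of a temporal
path from `u` to `v` (`0` if `u = v`, `⊤` if there is no temporal path). -/
noncomputable def temporalDist {V : Type*} (lab : V → V → Set ℕ) (u v : V) : ℕ∞ :=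
  sInf {n : ℕ∞ | ∃ p : List (V × ℕ), IsTemporalPath lab u v p ∧ (p.length : ℕ∞) = n}

/-- The labelling of the communication temporal graph `𝒢[s]` of a strategy profile `s`:
`t` is a label of the edge `uv` iff `(u, t) ∈ s v` or `(v, t) ∈ s u`. -/
def profLab {V : Type*} (s : V → Finset (V × ℕ)) : V → V → Set ℕ :=
  fun u v => {t | (u, t) ∈ s v ∨ (v, t) ∈ s u}

/-- The (finite) set of time labels of the edge `uv` in the communication temporal graph. -/
def labelFinset {V : Type*} [DecidableEq V] (s : V → Finset (V × ℕ)) (u v : V) : Finset ℕ :=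
  (((s v).filter (fun p => p.1 = u)).image Prod.snd) ∪
    (((s u).filter (fun p => p.1 = v)).image Prod.snd)

/-- The total number of time labels `∑ e ∈ E, |λ(e)|` of the communication temporal graph
(each unordered pair is counted once, whence the division by `2`). -/
def numLabels {V : Type*} [Fintype V] [DecidableEq V] (s : V → Finset (V × ℕ)) : ℕ :=
  (∑ u : V, ∑ v : V, if u = v then 0 else (labelFinset s u v).card) / 2

/-- The number of edges `|E|` of the communication temporal graph. -/
def numEdges {V : Type*} [Fintype V] [DecidableEq V] (s : V → Finset (V × ℕ)) : ℕ :=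
  ((Finset.univ : Finset (V × V)).filter
    (fun q => q.1 ≠ q.2 ∧ (labelFinset s q.1 q.2).Nonempty)).card / 2

/-- The social cost `c[s] = α·∑_{e ∈ E} |λ(e)| + ∑_{(u,v) ∈ V×V} d_{𝒢[s]}(u,v)`
of a strategy profile `s` for atomic cost `α`. -/
noncomputable def socialCost {V : Type*} [Fintype V] [DecidableEq V]
    (α : ℝ) (s : V → Finset (V × ℕ)) : ℝ≥0∞ :=
  ENNReal.ofReal α * (numLabels s : ℝ≥0∞) +
    ∑ u : V, ∑ v : V, (temporalDist (profLab s) u v : ℝ≥0∞)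

/-- The individual cost `c[s](v) = α·|s(v)| + ∑_{w ∈ V} d_{𝒢[s]}(v,w)` of player `v`. -/
noncomputable def indivCost {V : Type*} [Fintype V]
    (α : ℝ) (s : V → Finset (V × ℕ)) (v : V) : ℝ≥0∞ :=
  ENNReal.ofReal α * ((s v).card : ℝ≥0∞) +
    ∑ w : V, (temporalDist (profLab s) v w : ℝ≥0∞)

/-- A strategy profile is a Nash equilibrium if no player can strictly decrease its individual
cost by changing only its own strategy. -/
def IsNash {V : Type*} [Fintype V] [DecidableEq V] (α : ℝ) (s : V → Finset (V × ℕ)) : Prop :=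
  ∀ (v : V) (t : Finset (V × ℕ)),
    ¬ indivCost α (Function.update s v t) v < indivCost α s v

/-- The optimal social cost `c*(α, n)`: the minimum social cost over all strategy profiles
with `n` players and atomic cost `α`. -/
noncomputable def optCost (α : ℝ) (n : ℕ) : ℝ≥0∞ :=
  ⨅ s : Fin n → Finset (Fin n × ℕ), socialCost α s

/-- The price of anarchy `PoA(α, n)`: the maximum social cost of a Nash equilibrium with `n`
players and atomic cost `α`, divided by the optimal social cost `c*(α, n)`. -/
noncomputable def PoA (α : ℝ) (n : ℕ) : ℝ≥0∞ :=
  (⨆ s : {s : Fin n → Finset (Fin n × ℕ) // IsNash α s}, socialCost α s.1) / optCost α n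

/-- The price of stability `PoS(α, n)`: the minimum social cost of a Nash equilibrium with `n`
players and atomic cost `α`, divided by the optimal social cost `c*(α, n)`. -/
noncomputable def PoS (α : ℝ) (n : ℕ) : ℝ≥0∞ :=
  (⨅ s : {s : Fin n → Finset (Fin n × ℕ) // IsNash α s}, socialCost α s.1) / optCost α n

/-!
Charge the social cost to ordered pairs of distinct players, splitting the labels of each edge
evenly between its two orientations, so that the pair `(u, v)` pays `α/2 · |λ(uv)| + d(u, v)`.
If `uv` is an edge this is at least `α/2 + 1`; otherwise `d(u, v) ≥ 2 ≥ α/2 + 1` because `α ≤ 2`.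
Hence every profile costs at least `n(n-1)(α+2)/2`, and a complete graph with one label per edge,
where all distances are `1`, costs exactly that.
-/

open Finset

section TemporalDistance

variable {V : Type*} (lab : V → V → Set ℕ) {u v : V}

lemma temporalDist_self (u : V) : temporalDist lab u u = 0 := by
  refine le_antisymm (sInf_le ⟨[], ?_, rfl⟩) zero_le
  exact ⟨List.isChain_singleton _, List.isChain_nil, by simp, rfl⟩

lemma one_le_temporalDist (h : u ≠ v) : 1 ≤ temporalDist lab u v := by
  refine le_sInf ?_
  rintro _ ⟨_ | ⟨a, p⟩, hp, rfl⟩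
  · exact absurd hp.2.2.2 h
  · simp

lemma temporalDist_eq_one {t : ℕ} (ht : t ∈ lab u v) (h : u ≠ v) :
    temporalDist lab u v = 1 := by
  refine le_antisymm (sInf_le ⟨[(v, t)], ?_, rfl⟩) (one_le_temporalDist lab h)
  exact ⟨.cons_cons ht (List.isChain_singleton _), List.isChain_singleton t, by simp [h], rfl⟩

lemma two_le_temporalDist (hlab : lab u v = ∅) (h : u ≠ v) : 2 ≤ temporalDist lab u v := by
  refine le_sInf ?_
  rintro _ ⟨_ | ⟨⟨w, t⟩, _ | ⟨a, p⟩⟩, hp, rfl⟩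
  · exact absurd hp.2.2.2 h
  · obtain rfl : w = v := hp.2.2.2
    simpa [hlab] using (List.isChain_cons_cons.mp hp.1).1
  · exact_mod_cast (by simp : 2 ≤ ((w, t) :: a :: p).length)

end TemporalDistance

lemma even_sum_sum_of_symm {V : Type*} [Fintype V] (f : V → V → ℕ)
    (hsymm : ∀ u v, f u v = f v u) (hdiag : ∀ u, f u u = 0) : Even (∑ u, ∑ v, f u v) := by
  simp only [← ZMod.natCast_eq_zero_iff_even, Nat.cast_sum]
  rw [← Fintype.sum_prod_type']
  refine Finset.sum_ninvolution Prod.swap (fun a => ?_) (fun a ha => ?_) (fun _ => mem_univ _)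
    Prod.swap_swap
  · rw [Prod.fst_swap, Prod.snd_swap, hsymm, CharTwo.add_self_eq_zero]
  · intro hswap
    obtain ⟨a, b⟩ := a
    obtain rfl : b = a := congrArg Prod.fst hswap
    simp [hdiag] at ha

lemma sum_sum_ite_eq_ne {V M : Type*} [Fintype V] [DecidableEq V] [AddCommMonoid M] (x : M) :
    ∑ u : V, ∑ v : V, (if u = v then 0 else x) = (Fintype.card V * (Fintype.card V - 1)) • x := by
  have row (u : V) : ∑ v, (if u = v then 0 else x) = (Fintype.card V - 1) • x := by
    rw [sum_ite, sum_const_zero, zero_add, sum_const, filter_ne, card_erase_of_mem (mem_univ u),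
      card_univ]
  simp only [row, sum_const, card_univ, smul_smul]

section Profile

variable {V : Type*} [DecidableEq V] (s : V → Finset (V × ℕ))

lemma coe_labelFinset (u v : V) : (labelFinset s u v : Set ℕ) = profLab s u v := by
  ext t
  simp [labelFinset, profLab, eq_comm]

lemma labelFinset_comm (u v : V) : labelFinset s u v = labelFinset s v u :=
  Finset.union_comm _ _

lemma two_mul_numLabels [Fintype V] :
    2 * numLabels s = ∑ u, ∑ v, if u = v then 0 else #(labelFinset s u v) := by
  refine Nat.mul_div_cancel' (even_sum_sum_of_symm _ (fun u v => ?_) (by simp)).two_dvd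
  simp only [eq_comm (a := u), labelFinset_comm s u v]

end Profile

section SocialCost

variable {V : Type*} [DecidableEq V] (s : V → Finset (V × ℕ)) {α : ℝ}

noncomputable def pairCost (α : ℝ) (u v : V) : ℝ≥0∞ :=
  ENNReal.ofReal (α / 2) * #(labelFinset s u v) + temporalDist (profLab s) u v

lemma socialCost_eq_sum_sum [Fintype V] (α : ℝ) :
    socialCost α s = ∑ u, ∑ v, if u = v then 0 else pairCost s α u v := by
  have hα : ENNReal.ofReal α = ENNReal.ofReal (α / 2) * 2 := by
    rw [← ENNReal.ofReal_ofNat 2, ← ENNReal.ofReal_mul' zero_le_two, div_mul_cancel₀ _ two_ne_zero]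
  have hnum : 2 * (numLabels s : ℝ≥0∞) = ((2 * numLabels s : ℕ) : ℝ≥0∞) := by push_cast; rfl
  rw [socialCost, hα, mul_assoc, hnum, two_mul_numLabels, Nat.cast_sum, mul_sum,
    ← sum_add_distrib]
  refine sum_congr rfl fun u _ => ?_
  rw [Nat.cast_sum, mul_sum, ← sum_add_distrib]
  refine sum_congr rfl fun v _ => ?_
  split_ifs with h
  · simp [h, temporalDist_self]
  · rfl

lemma ofReal_add_two_div_two (hα : 0 ≤ α) :
    ENNReal.ofReal ((α + 2) / 2) = ENNReal.ofReal (α / 2) + 1 := by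
  rw [add_div, div_self two_ne_zero, ENNReal.ofReal_add (by positivity) zero_le_one,
    ENNReal.ofReal_one]

lemma ofReal_le_pairCost (hα0 : 0 ≤ α) (hα2 : α ≤ 2) {u v : V} (h : u ≠ v) :
    ENNReal.ofReal ((α + 2) / 2) ≤ pairCost s α u v := by
  rw [pairCost]
  rcases (labelFinset s u v).eq_empty_or_nonempty with hempty | hne
  · have hlab : profLab s u v = ∅ := by rw [← coe_labelFinset, hempty, coe_empty]
    calc ENNReal.ofReal ((α + 2) / 2) ≤ 2 := by
          rw [← ENNReal.ofReal_ofNat 2]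
          exact ENNReal.ofReal_le_ofReal (by linarith)
      _ ≤ temporalDist (profLab s) u v := by exact_mod_cast two_le_temporalDist _ hlab h
      _ ≤ _ := le_add_self
  · rw [ofReal_add_two_div_two hα0]
    gcongr
    · exact le_mul_of_one_le_right zero_le (by exact_mod_cast hne.card_pos)
    · exact_mod_cast one_le_temporalDist _ h

lemma pairCost_eq_of_card_labelFinset_eq_one (hα : 0 ≤ α) {u v : V} (h : u ≠ v)
    (hcard : #(labelFinset s u v) = 1) :
    pairCost s α u v = ENNReal.ofReal ((α + 2) / 2) := by
  obtain ⟨t, ht⟩ := card_eq_one.mp hcard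
  have hmem : t ∈ profLab s u v := by simp [← coe_labelFinset, ht]
  rw [pairCost, hcard, temporalDist_eq_one _ hmem h, ofReal_add_two_div_two hα]
  simp

lemma card_mul_pred_nsmul_le_socialCost [Fintype V] (hα0 : 0 ≤ α) (hα2 : α ≤ 2) :
    (Fintype.card V * (Fintype.card V - 1)) • ENNReal.ofReal ((α + 2) / 2) ≤
      socialCost α s := by
  rw [socialCost_eq_sum_sum, ← sum_sum_ite_eq_ne]
  gcongr with u _ v _
  split_ifs with h
  · exact le_rfl
  · exact ofReal_le_pairCost s hα0 hα2 h

lemma socialCost_eq_of_card_labelFinset_eq_one [Fintype V] (hα : 0 ≤ α)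
    (hs : ∀ u v, u ≠ v → #(labelFinset s u v) = 1) :
    socialCost α s = (Fintype.card V * (Fintype.card V - 1)) • ENNReal.ofReal ((α + 2) / 2) := by
  rw [socialCost_eq_sum_sum, ← sum_sum_ite_eq_ne]
  refine sum_congr rfl fun u _ => sum_congr rfl fun v _ => ?_
  split_ifs with h
  · rfl
  · exact pairCost_eq_of_card_labelFinset_eq_one s hα h (hs u v h)

end SocialCost

def completeProfile (V : Type*) [Fintype V] : V → Finset (V × ℕ) :=
  fun _ => univ ×ˢ {0}

lemma labelFinset_completeProfile {V : Type*} [Fintype V] [DecidableEq V] (u v : V) :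
    labelFinset (completeProfile V) u v = {0} := by
  ext t
  simp [labelFinset, completeProfile, eq_comm]

lemma nsmul_ofReal_add_two_div_two (α : ℝ) (n : ℕ) :
    (n * (n - 1)) • ENNReal.ofReal ((α + 2) / 2) = ENNReal.ofReal ((α + 2) * n * (n - 1) / 2) := by
  rw [← ENNReal.ofReal_nsmul, nsmul_eq_mul]
  congr 1
  rcases n with _ | n
  · simp
  · push_cast
    ring

theorem statement_6_general (α : ℝ) (hα0 : 0 < α) (hα2 : α ≤ 2) (n : ℕ) :
    optCost α n = ENNReal.ofReal ((α + 2) * (n : ℝ) * ((n : ℝ) - 1) / 2) ∧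
      ∀ s : Fin n → Finset (Fin n × ℕ),
        (∀ u v : Fin n, u ≠ v → (labelFinset s u v).card = 1) →
        socialCost α s = optCost α n := by
  have hsimple : ∀ s : Fin n → Finset (Fin n × ℕ),
      (∀ u v : Fin n, u ≠ v → (labelFinset s u v).card = 1) →
        socialCost α s = ENNReal.ofReal ((α + 2) * (n : ℝ) * ((n : ℝ) - 1) / 2) := by
    intro s hs
    rw [socialCost_eq_of_card_labelFinset_eq_one s hα0.le hs, Fintype.card_fin,
      nsmul_ofReal_add_two_div_two]
  have hopt : optCost α n = ENNReal.ofReal ((α + 2) * (n : ℝ) * ((n : ℝ) - 1) / 2) := by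
    refine le_antisymm ?_ (le_iInf fun s => ?_)
    · refine (iInf_le _ (completeProfile (Fin n))).trans_eq (hsimple _ fun u v _ => ?_)
      rw [labelFinset_completeProfile, card_singleton]
    · have hlow := card_mul_pred_nsmul_le_socialCost s hα0.le hα2
      rwa [Fintype.card_fin, nsmul_ofReal_add_two_div_two] at hlow
  exact ⟨hopt, fun s hs => (hsimple s hs).trans hopt.symm⟩

/-- For every atomic cost `0 < α ≤ 2` and every number of players `n ≥ 2`, the optimal
social cost is `(α+2)·n(n-1)/2`, and it is achieved by any strategy profile whose
communication temporal graph is the complete graph `K_n` with any simple labelling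
(i.e. every pair of distinct vertices is joined by an edge carrying exactly one time
label). -/
theorem statement_6 (α : ℝ) (hα0 : 0 < α) (hα2 : α ≤ 2) (n : ℕ) (hn : 2 ≤ n) :
    optCost α n = ENNReal.ofReal ((α + 2) * (n : ℝ) * ((n : ℝ) - 1) / 2) ∧
      ∀ s : Fin n → Finset (Fin n × ℕ),
        (∀ u v : Fin n, u ≠ v → (labelFinset s u v).card = 1) →
        socialCost α s = optCost α n :=
  statement_6_general α hα0 hα2 n
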